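/- The product x y z is constant along trajectories of P: if I ⊆ ℝ is an interval and γ = (γ₁, γ₂, γ₃) : I → ℝ³ is differentiable with γ'(t) = P(γ(t)) for all t ∈ I, then the function t ↦ γ₁(t)·γ₂(t)·γ₃(t) is constant on I. Equivalently, for all real x, y, z one has x y · P₃(x,y,z) + x z · P₂(x,y,z) + y z · P₁(x,y,z) = 0. -/

import Mathlib

open Filter Set Topology

noncomputable section

/-- The rock–paper–scissors vector field `P` on `ℝ³`, with components
`P₁(x,y,z) = x(z-y)/2`, `P₂(x,y,z) = y(x-z)/2`, `P₃(x,y,z) = z(y-x)/2`. -/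
def Pfield : ℝ × ℝ × ℝ → ℝ × ℝ × ℝ :=
  fun p => (p.1 * (p.2.2 - p.2.1) / 2, p.2.1 * (p.1 - p.2.2) / 2, p.2.2 * (p.2.1 - p.1) / 2)

/-- The simplex `Δ² = {(x,y,z) : x,y,z ≥ 0, x+y+z = 1}`. -/
def simplex2 : Set (ℝ × ℝ × ℝ) :=
  {p | 0 ≤ p.1 ∧ 0 ≤ p.2.1 ∧ 0 ≤ p.2.2 ∧ p.1 + p.2.1 + p.2.2 = 1}

/-!
Along a curve, `d/dt (xyz) = yz·x' + xz·y' + xy·z'`. For the field `P` the three terms are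
`xyz(z-y)/2`, `xyz(x-z)/2` and `xyz(y-x)/2`, which cancel, so `xyz` has zero derivative along
every trajectory and is therefore constant on any interval, by the mean value inequality.
-/

theorem Set.OrdConnected.eq_of_hasDerivAt_eq_zero {E : Type*} [NormedAddCommGroup E]
    [NormedSpace ℝ E] {f : ℝ → E} {I : Set ℝ} (hI : I.OrdConnected)
    (hf : ∀ t ∈ I, HasDerivAt f 0 t) {s t : ℝ} (hs : s ∈ I) (ht : t ∈ I) : f s = f t := by
  have h := hI.convex.norm_image_sub_le_of_norm_hasDerivWithin_le (C := 0)
    (fun u hu => (hf u hu).hasDerivWithinAt) (fun _ _ => norm_zero.le) ht hs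
  rwa [zero_mul, norm_le_zero_iff, sub_eq_zero] at h

section ProdDeriv

variable {𝕜 F G : Type*} [NontriviallyNormedField 𝕜] [NormedAddCommGroup F] [NormedSpace 𝕜 F]
  [NormedAddCommGroup G] [NormedSpace 𝕜 G] {f : 𝕜 → F × G} {f' : F × G} {x : 𝕜}

protected theorem HasDerivAt.fst (h : HasDerivAt f f' x) : HasDerivAt (fun t => (f t).1) f'.1 x :=
  (ContinuousLinearMap.fst 𝕜 F G).hasFDerivAt.comp_hasDerivAt x h

protected theorem HasDerivAt.snd (h : HasDerivAt f f' x) : HasDerivAt (fun t => (f t).2) f'.2 x :=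
  (ContinuousLinearMap.snd 𝕜 F G).hasFDerivAt.comp_hasDerivAt x h

end ProdDeriv

theorem HasDerivAt.coord_prod {γ : ℝ → ℝ × ℝ × ℝ} {v : ℝ × ℝ × ℝ} {t : ℝ}
    (h : HasDerivAt γ v t) :
    HasDerivAt (fun u => (γ u).1 * (γ u).2.1 * (γ u).2.2)
      ((γ t).2.1 * (γ t).2.2 * v.1 + (γ t).1 * (γ t).2.2 * v.2.1 +
        (γ t).1 * (γ t).2.1 * v.2.2) t := by
  have hxy : HasDerivAt (fun u => (γ u).1 * (γ u).2.1) _ t := h.fst.mul h.snd.fst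
  have hprod : HasDerivAt (fun u => (γ u).1 * (γ u).2.1 * (γ u).2.2) _ t := hxy.mul h.snd.snd
  convert hprod using 1
  ring

theorem Pfield_grad_coord_prod_eq_zero (p : ℝ × ℝ × ℝ) :
    p.2.1 * p.2.2 * (Pfield p).1 + p.1 * p.2.2 * (Pfield p).2.1 +
      p.1 * p.2.1 * (Pfield p).2.2 = 0 := by
  simp only [Pfield]
  ring

theorem HasDerivAt.coord_prod_eq_zero_of_Pfield {γ : ℝ → ℝ × ℝ × ℝ} {t : ℝ}
    (h : HasDerivAt γ (Pfield (γ t)) t) :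
    HasDerivAt (fun u => (γ u).1 * (γ u).2.1 * (γ u).2.2) 0 t := by
  simpa only [Pfield_grad_coord_prod_eq_zero] using h.coord_prod

/-- The product `xyz` is constant along trajectories of `P`; equivalently
`xy·P₃ + xz·P₂ + yz·P₁ = 0` identically. -/
theorem rps_product_invariant :
    (∀ x y z : ℝ,
      x * y * (z * (y - x) / 2) + x * z * (y * (x - z) / 2) + y * z * (x * (z - y) / 2) = 0) ∧
    (∀ I : Set ℝ, I.OrdConnected →
      ∀ γ : ℝ → ℝ × ℝ × ℝ, (∀ t ∈ I, HasDerivAt γ (Pfield (γ t)) t) →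
      ∀ s ∈ I, ∀ t ∈ I,
        (γ s).1 * (γ s).2.1 * (γ s).2.2 = (γ t).1 * (γ t).2.1 * (γ t).2.2) := by
  refine ⟨fun x y z => by ring, fun I hI γ hγ s hs t ht => ?_⟩
  exact hI.eq_of_hasDerivAt_eq_zero (fun u hu => (hγ u hu).coord_prod_eq_zero_of_Pfield) hs ht
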